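/- arXiv:math/0610094 — 3 statements merged into one kernel-verified Lean document; each statement's English description precedes it below -/
import Mathlib

section
/- Suppose E_k f = Σ_{i=1}^{k} ⟨ũ_i, f⟩ v_i is the oblique projector onto V_k = span{v₁,…,v_k} along W⊥, and v_{k+1} ∉ V_k with V_{k+1} ∩ W⊥ = {0}. Define q_{k+1} = u_{k+1} − P_{W_k} u_{k+1} where u_{k+1} = v_{k+1} − P_{W⊥} v_{k+1} and W_k = span{u₁,…,u_k}, and assume q_{k+1} ≠ 0. Then the operator E_{k+1} f = E_k f − ⟨q_{k+1}/‖q_{k+1}‖², f⟩ E_k u_{k+1} + ⟨q_{k+1}/‖q_{k+1}‖², f⟩ v_{k+1} is idempotent, fixes every vector of V_{k+1} = span{v₁,…,v_{k+1}}, and annihilates W⊥. -/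
/-- updating with a new (non-redundant) vector. With
`E_k f = Σᵢ ⟨ũᵢ, f⟩ vᵢ` the oblique projector onto `V_k` along `W⊥`,
`u_{k+1} = v_{k+1} − P_{W⊥} v_{k+1}`, `q_{k+1} = u_{k+1} − P_{W_k} u_{k+1} ≠ 0`,
the operator `E_{k+1} f = E_k f − (⟨q,f⟩/‖q‖²) E_k u_{k+1} + (⟨q,f⟩/‖q‖²) v_{k+1}`
is idempotent, fixes `V_{k+1}`, and annihilates `W⊥`. -/
theorem stmt_11 {H : Type*} [NormedAddCommGroup H] [InnerProductSpace ℂ H]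
    (k : ℕ) (Wp : Submodule ℂ H) (hWp : IsClosed (Wp : Set H))
    (v : Fin (k + 1) → H) (ut : Fin k → H)
    (Vk : Submodule ℂ H)
    (hVk : Vk = Submodule.span ℂ (Set.range fun i : Fin k => v i.castSucc))
    (Vk1 : Submodule ℂ H) (hVk1 : Vk1 = Submodule.span ℂ (Set.range v))
    (hnotmem : v (Fin.last k) ∉ Vk) (hdisj : Vk1 ⊓ Wp = ⊥)
    (Ek : H → H)
    (hEk : ∀ f : H, Ek f = ∑ i : Fin k, (inner ℂ (ut i) f : ℂ) • v i.castSucc)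
    (hfix : ∀ x ∈ Vk, Ek x = x) (hkill : ∀ w ∈ Wp, Ek w = 0)
    (Pwp : H →L[ℂ] H)
    (hPwp : ∀ f : H, Pwp f ∈ Wp ∧ ∀ y ∈ Wp, (inner ℂ (f - Pwp f) y : ℂ) = 0)
    (u : Fin (k + 1) → H) (hu : ∀ i, u i = v i - Pwp (v i))
    (Wk : Submodule ℂ H)
    (hWk : Wk = Submodule.span ℂ (Set.range fun i : Fin k => u i.castSucc))
    (Pwk : H →L[ℂ] H)
    (hPwk : ∀ f : H, Pwk f ∈ Wk ∧ ∀ y ∈ Wk, (inner ℂ (f - Pwk f) y : ℂ) = 0)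
    (q : H) (hq : q = u (Fin.last k) - Pwk (u (Fin.last k))) (hq0 : q ≠ 0)
    (Ek1 : H → H)
    (hEk1 : ∀ f : H,
      Ek1 f = Ek f - ((inner ℂ q f : ℂ) / (‖q‖ : ℂ) ^ 2) • Ek (u (Fin.last k))
                + ((inner ℂ q f : ℂ) / (‖q‖ : ℂ) ^ 2) • v (Fin.last k)) :
    (∀ f : H, Ek1 (Ek1 f) = Ek1 f) ∧
    (∀ x ∈ Vk1, Ek1 x = x) ∧
    (∀ w ∈ Wp, Ek1 w = 0) := by
  have hnq : (‖q‖ : ℂ) ^ 2 ≠ 0 :=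
    pow_ne_zero 2 (by exact_mod_cast norm_ne_zero_iff.mpr hq0)
  have hEkadd : ∀ x y, Ek (x + y) = Ek x + Ek y := by
    intro x y; simp [hEk, inner_add_right, add_smul, Finset.sum_add_distrib]
  have hEksmul : ∀ (c : ℂ) (x : H), Ek (c • x) = c • Ek x := by
    intro c x; simp [hEk, inner_smul_right, smul_smul, Finset.smul_sum]
  have huWp : ∀ i, ∀ w ∈ Wp, (inner ℂ (u i) w : ℂ) = 0 := by
    intro i w hw; rw [hu]; exact (hPwp (v i)).2 w hw
  have hWkWp : ∀ x ∈ Wk, ∀ w ∈ Wp, (inner ℂ x w : ℂ) = 0 := by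
    intro x hx w hw
    rw [hWk] at hx
    induction hx using Submodule.span_induction with
    | mem x hx => obtain ⟨i, rfl⟩ := hx; exact huWp _ w hw
    | zero => simp
    | add x y _ _ hx hy => simp [inner_add_left, hx, hy]
    | smul c x _ hx => simp [inner_smul_left, hx]
  have hqWp : ∀ w ∈ Wp, (inner ℂ q w : ℂ) = 0 := by
    intro w hw
    rw [hq, inner_sub_left, huWp _ w hw, hWkWp _ ((hPwk _).1) w hw, sub_zero]
  have hqu : ∀ i : Fin k, (inner ℂ q (u i.castSucc) : ℂ) = 0 := by
    intro i
    have := (hPwk (u (Fin.last k))).2 (u i.castSucc)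
      (by rw [hWk]; exact Submodule.subset_span ⟨i, rfl⟩)
    rw [hq]; exact this
  have hqv : ∀ i : Fin k, (inner ℂ q (v i.castSucc) : ℂ) = 0 := by
    intro i
    have hvd : v i.castSucc = u i.castSucc + Pwp (v i.castSucc) := by rw [hu]; abel
    rw [hvd, inner_add_right, hqu, hqWp _ ((hPwp _).1), add_zero]
  have hqq : (inner ℂ q q : ℂ) = (‖q‖ : ℂ) ^ 2 := inner_self_eq_norm_sq_to_K q
  have hqulast : (inner ℂ q (u (Fin.last k)) : ℂ) = (‖q‖ : ℂ) ^ 2 := by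
    have hud : u (Fin.last k) = q + Pwk (u (Fin.last k)) := by rw [hq]; abel
    have hz := (hPwk (u (Fin.last k))).2 (Pwk (u (Fin.last k))) ((hPwk _).1)
    rw [← hq] at hz
    rw [hud, inner_add_right, hqq, hz, add_zero]
  have hqvlast : (inner ℂ q (v (Fin.last k)) : ℂ) = (‖q‖ : ℂ) ^ 2 := by
    have hvd : v (Fin.last k) = u (Fin.last k) + Pwp (v (Fin.last k)) := by rw [hu]; abel
    rw [hvd, inner_add_right, hqulast, hqWp _ ((hPwp _).1), add_zero]
  have hEkv : Ek (v (Fin.last k)) = Ek (u (Fin.last k)) := by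
    have h1 : v (Fin.last k) = u (Fin.last k) + Pwp (v (Fin.last k)) := by rw [hu]; abel
    rw [h1, hEkadd, hkill _ ((hPwp _).1), add_zero]
  have hfixv : ∀ j : Fin (k + 1), Ek1 (v j) = v j := by
    intro j
    induction j using Fin.lastCases with
    | last => rw [hEk1, hqvlast, div_self hnq, one_smul, one_smul, hEkv]; abel
    | cast i =>
      rw [hEk1, hqv, zero_div, zero_smul, zero_smul, sub_zero, add_zero]
      exact hfix _ (by rw [hVk]; exact Submodule.subset_span ⟨i, rfl⟩)
  have hkill1 : ∀ w ∈ Wp, Ek1 w = 0 := by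
    intro w hw
    rw [hEk1, hqWp w hw, zero_div, zero_smul, zero_smul, sub_zero, add_zero, hkill w hw]
  have hEk1add : ∀ x y, Ek1 (x + y) = Ek1 x + Ek1 y := by
    intro x y
    simp only [hEk1, hEkadd, inner_add_right, add_div, add_smul]; abel
  have hEk1smul : ∀ (c : ℂ) (x : H), Ek1 (c • x) = c • Ek1 x := by
    intro c x
    simp only [hEk1, hEksmul, inner_smul_right, mul_div_assoc, mul_smul, smul_sub, smul_add]
  have hfix1 : ∀ x ∈ Vk1, Ek1 x = x := by
    intro x hx
    rw [hVk1] at hx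
    induction hx using Submodule.span_induction with
    | mem x hx => obtain ⟨j, rfl⟩ := hx; exact hfixv j
    | zero => simpa using hEk1smul 0 0
    | add x y _ _ hx hy => rw [hEk1add, hx, hy]
    | smul c x _ hx => rw [hEk1smul, hx]
  have hmem : ∀ f, Ek1 f ∈ Vk1 := by
    intro f
    have hv : ∀ j, v j ∈ Vk1 := fun j => by
      rw [hVk1]; exact Submodule.subset_span ⟨j, rfl⟩
    have hEkmem : ∀ g, Ek g ∈ Vk1 := fun g => by
      rw [hEk]
      exact Submodule.sum_mem _ fun i _ => Submodule.smul_mem _ _ (hv i.castSucc)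
    rw [hEk1]
    exact Submodule.add_mem _
      (Submodule.sub_mem _ (hEkmem f) (Submodule.smul_mem _ _ (hEkmem _)))
      (Submodule.smul_mem _ _ (hv _))
  exact ⟨fun f => hfix1 _ (hmem f), hfix1, hkill1⟩
end

section
/- Downdating, non-redundant case: let E_k f = Σ_{i=1}^{k} ⟨ũ_i, f⟩ v_i be the oblique projector onto V_k along W⊥ with duals ũ_i ∈ W_k, and suppose v_j ∉ V_{k∖j} = span{v_i : i ≠ j} and ũ_j ≠ 0. Then the operator D f = Σ_{i≠j} ⟨ũ_i − (⟨ũ_j, ũ_i⟩/‖ũ_j‖²)* ũ_j, f⟩ v_i, equivalently D = E_k − E_k ∘ P_{ũ_j} where P_{ũ_j} is the orthogonal projection onto span{ũ_j}, is the oblique projector onto V_{k∖j} along W⊥. -/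
/-- downdating, non-redundant case. With `E_k f = Σᵢ ⟨ũᵢ, f⟩ vᵢ` the
oblique projector onto `V_k` along `W⊥`, duals `ũᵢ ∈ W_k` satisfying
`P_{W_k} = Σᵢ uᵢ ⟨ũᵢ, ·⟩` (`uᵢ = vᵢ − P_{W⊥} vᵢ`), `vⱼ ∉ V_{k∖j}` and `ũⱼ ≠ 0`,
the operator `D = E_k − E_k ∘ P_{ũⱼ}` is the oblique projector onto `V_{k∖j}`
along `W⊥`: it is idempotent, has range in `V_{k∖j}`, fixes `V_{k∖j}`, and
annihilates `W⊥`. -/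
theorem stmt_15 {H : Type*} [NormedAddCommGroup H] [InnerProductSpace ℂ H]
    (k : ℕ) (Wp : Submodule ℂ H) (hWp : IsClosed (Wp : Set H))
    (v ut : Fin k → H) (j : Fin k)
    (Vk : Submodule ℂ H) (hVk : Vk = Submodule.span ℂ (Set.range v))
    (hdisj : Vk ⊓ Wp = ⊥)
    (Ek : H → H)
    (hEk : ∀ f : H, Ek f = ∑ i : Fin k, (inner ℂ (ut i) f : ℂ) • v i)
    (hfix : ∀ x ∈ Vk, Ek x = x) (hkill : ∀ w ∈ Wp, Ek w = 0)
    (Pwp : H →L[ℂ] H)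
    (hPwp : ∀ f : H, Pwp f ∈ Wp ∧ ∀ y ∈ Wp, (inner ℂ (f - Pwp f) y : ℂ) = 0)
    (u : Fin k → H) (hu : ∀ i, u i = v i - Pwp (v i))
    (Wk : Submodule ℂ H) (hWk : Wk = Submodule.span ℂ (Set.range u))
    (hut : ∀ i, ut i ∈ Wk)
    (Pwk : H →L[ℂ] H)
    (hPwk : ∀ f : H, Pwk f ∈ Wk ∧ ∀ y ∈ Wk, (inner ℂ (f - Pwk f) y : ℂ) = 0)
    (hrep : ∀ f : H, Pwk f = ∑ i : Fin k, (inner ℂ (ut i) f : ℂ) • u i)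
    (Vkj : Submodule ℂ H)
    (hVkj : Vkj = Submodule.span ℂ {x : H | ∃ i : Fin k, i ≠ j ∧ x = v i})
    (hvj : v j ∉ Vkj) (hutj : ut j ≠ 0)
    (D : H → H)
    (hD : ∀ f : H,
      D f = Ek f - Ek (((inner ℂ (ut j) f : ℂ) / (‖ut j‖ : ℂ) ^ 2) • ut j)) :
    (∀ f : H, D (D f) = D f) ∧
    (∀ f : H, D f ∈ Vkj) ∧
    (∀ x ∈ Vkj, D x = x) ∧
    (∀ w ∈ Wp, D w = 0) := by
  have hEk0 : Ek 0 = 0 := by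
    rw [hEk]; simp
  have hVkj_le : Vkj ≤ Vk := by
    rw [hVkj, hVk]
    apply Submodule.span_mono
    rintro x ⟨i, -, rfl⟩
    exact ⟨i, rfl⟩
  have hmemVkj : ∀ i : Fin k, i ≠ j → v i ∈ Vkj := by
    intro i hij
    rw [hVkj]
    exact Submodule.subset_span ⟨i, hij, rfl⟩
  -- ut j is orthogonal to Vkj
  have hA : ∀ x ∈ Vkj, (inner ℂ (ut j) x : ℂ) = 0 := by
    intro x hx
    by_contra hc
    apply hvj
    have hEx := hfix x (hVkj_le hx)
    rw [hEk] at hEx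
    have hx' : x = (inner ℂ (ut j) x : ℂ) • v j
        + ∑ i ∈ Finset.univ.erase j, (inner ℂ (ut i) x : ℂ) • v i :=
      hEx.symm.trans (Finset.add_sum_erase _ _ (Finset.mem_univ j)).symm
    have hs : (∑ i ∈ Finset.univ.erase j, (inner ℂ (ut i) x : ℂ) • v i) ∈ Vkj :=
      Submodule.sum_mem _ fun i hi =>
        Submodule.smul_mem _ _ (hmemVkj i (Finset.ne_of_mem_erase hi))
    have h2 : x - (∑ i ∈ Finset.univ.erase j, (inner ℂ (ut i) x : ℂ) • v i)
        = (inner ℂ (ut j) x : ℂ) • v j := sub_eq_iff_eq_add.mpr hx'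
    have hvjmem : v j = ((inner ℂ (ut j) x : ℂ))⁻¹ •
        (x - ∑ i ∈ Finset.univ.erase j, (inner ℂ (ut i) x : ℂ) • v i) := by
      rw [h2, smul_smul, inv_mul_cancel₀ hc, one_smul]
    rw [hvjmem]
    exact Submodule.smul_mem _ _ (Submodule.sub_mem _ hx hs)
  -- expansion of D f as a sum over i ≠ j
  have hnj : ((‖ut j‖ : ℂ) ^ 2) ≠ 0 := by
    simp [pow_eq_zero_iff, norm_eq_zero, hutj]
  have hself : (inner ℂ (ut j) (ut j) : ℂ) = (‖ut j‖ : ℂ) ^ 2 := by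
    rw [inner_self_eq_norm_sq_to_K]; norm_cast
  have hDf : ∀ f : H, D f = ∑ i ∈ Finset.univ.erase j,
      ((inner ℂ (ut i) f : ℂ) -
        ((inner ℂ (ut j) f : ℂ) / (‖ut j‖ : ℂ) ^ 2) * (inner ℂ (ut i) (ut j) : ℂ)) • v i := by
    intro f
    rw [hD, hEk, hEk]
    simp only [inner_smul_right]
    rw [← Finset.sum_sub_distrib]
    rw [← Finset.add_sum_erase _ (fun i => ((inner ℂ (ut i) f : ℂ) • v i -
        (((inner ℂ (ut j) f : ℂ) / (‖ut j‖ : ℂ) ^ 2) * (inner ℂ (ut i) (ut j) : ℂ)) • v i))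
        (Finset.mem_univ j)]
    have hzero : (inner ℂ (ut j) f : ℂ) • v j -
        (((inner ℂ (ut j) f : ℂ) / (‖ut j‖ : ℂ) ^ 2) * (inner ℂ (ut j) (ut j) : ℂ)) • v j = 0 := by
      rw [hself, div_mul_cancel₀ _ hnj, sub_self]
    rw [hzero, zero_add]
    apply Finset.sum_congr rfl
    intro i _
    rw [sub_smul]
  have hrange : ∀ f : H, D f ∈ Vkj := by
    intro f
    rw [hDf]
    exact Submodule.sum_mem _ fun i hi =>
      Submodule.smul_mem _ _ (hmemVkj i (Finset.ne_of_mem_erase hi))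
  have hfix' : ∀ x ∈ Vkj, D x = x := by
    intro x hx
    rw [hD, hA x hx]
    simp [hEk0, hfix x (hVkj_le hx)]
  refine ⟨fun f => hfix' _ (hrange f), hrange, hfix', ?_⟩
  intro w hw
  have hzw : (inner ℂ (ut j) w : ℂ) = 0 := by
    have hgen : ∀ z ∈ Wk, (inner ℂ z w : ℂ) = 0 := by
      intro z hz
      rw [hWk] at hz
      induction hz using Submodule.span_induction with
      | mem x hx =>
        obtain ⟨i, rfl⟩ := hx
        rw [hu]
        exact (hPwp (v i)).2 w hw
      | zero => simp
      | add x y _ _ hx hy => rw [inner_add_left, hx, hy, add_zero]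
      | smul c x _ hx => rw [inner_smul_left, hx, mul_zero]
    exact hgen _ (hut j)
  rw [hD, hzw]
  simp [hEk0, hkill w hw]
end

section
/- Biorthogonality of recursively constructed duals: let v₁,…,v_{k} be linearly independent with V_k ∩ W⊥ = {0}, u_i = v_i − P_{W⊥} v_i, q₁ = u₁, and recursively q_{n+1} = u_{n+1} − P_{span{u₁,…,u_n}} u_{n+1}, ũ_n^{(n)} = q_n/‖q_n‖², ũ_i^{(n+1)} = ũ_i^{(n)} − ⟨u_{n+1}, ũ_i^{(n)}⟩* · q_{n+1}/‖q_{n+1}‖² (i ≤ n). Then ⟨v_m, ũ_i^{(k)}⟩ = δ_{m,i} for all m, i = 1,…,k. -/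
/-- biorthogonality of the recursively constructed duals. With
`uₙ = vₙ − P_{W⊥} vₙ`, `qₙ₊₁ = uₙ₊₁ − P_{span{u₁,…,uₙ}} uₙ₊₁`,
`ũₙ⁽ⁿ⁾ = qₙ/‖qₙ‖²` and `ũᵢ⁽ⁿ⁺¹⁾ = ũᵢ⁽ⁿ⁾ − ⟨uₙ₊₁, ũᵢ⁽ⁿ⁾⟩ • qₙ₊₁/‖qₙ₊₁‖²`,
linear independence of the `vᵢ` and `span{vᵢ} ∩ W⊥ = {0}` give
`⟨v_m, ũᵢ⁽ᵏ⁾⟩ = δ_{m,i}`. Projections are characterized by membership of the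
value and orthogonality of the residual. -/
theorem stmt_17 {H : Type*} [NormedAddCommGroup H] [InnerProductSpace ℂ H]
    (k : ℕ) (hk : 0 < k) (Wp : Submodule ℂ H) (hWp : IsClosed (Wp : Set H))
    (v u q : ℕ → H) (ut : ℕ → ℕ → H)
    (hli : LinearIndependent ℂ (fun i : Fin k => v i))
    (hdisj : Submodule.span ℂ {x : H | ∃ i < k, x = v i} ⊓ Wp = ⊥)
    (Pwp : H →L[ℂ] H)
    (hPwp : ∀ f : H, Pwp f ∈ Wp ∧ ∀ y ∈ Wp, (inner ℂ (f - Pwp f) y : ℂ) = 0)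
    (hu : ∀ i < k, u i = v i - Pwp (v i))
    (hqmem : ∀ n < k, u n - q n ∈ Submodule.span ℂ {x : H | ∃ i < n, x = u i})
    (hqorth : ∀ n < k, ∀ y ∈ Submodule.span ℂ {x : H | ∃ i < n, x = u i},
        (inner ℂ (q n) y : ℂ) = 0)
    (hdiag : ∀ n < k, ut n n = (((‖q n‖ : ℂ) ^ 2)⁻¹) • q n)
    (hrec : ∀ n, n + 1 < k → ∀ i ≤ n,
        ut (n + 1) i = ut n i -
          (inner ℂ (u (n + 1)) (ut n i) : ℂ) • ((((‖q (n + 1)‖ : ℂ) ^ 2)⁻¹) • q (n + 1))) :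
    ∀ m < k, ∀ i < k,
      (inner ℂ (v m) (ut (k - 1) i) : ℂ) = if m = i then 1 else 0 := by
  -- u i is orthogonal to Wp (first slot)
  have huWp : ∀ i < k, ∀ w ∈ Wp, (inner ℂ (u i) w : ℂ) = 0 := by
    intro i hi w hw
    rw [hu i hi]
    exact (hPwp (v i)).2 w hw
  -- second-slot version
  have huWp' : ∀ i < k, ∀ w ∈ Wp, (inner ℂ w (u i) : ℂ) = 0 := by
    intro i hi w hw
    rw [← inner_conj_symm, huWp i hi w hw, map_zero]
  -- span helper: if w ⊥ every element of S (second slot), then w ⊥ span S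
  have key : ∀ (w : H) (S : Set H), (∀ x ∈ S, (inner ℂ w x : ℂ) = 0) →
      ∀ s ∈ Submodule.span ℂ S, (inner ℂ w s : ℂ) = 0 := by
    intro w S hS s hs
    induction hs using Submodule.span_induction with
    | mem x hx => exact hS x hx
    | zero => simp
    | add x y _ _ hx hy => rw [inner_add_right, hx, hy, add_zero]
    | smul c x _ hx => rw [inner_smul_right, hx, mul_zero]
  -- the u's are linearly independent
  have hLIu : LinearIndependent ℂ (fun i : Fin k => u i) := by
    have hfun : (fun i : Fin k => u i)
        = ((LinearMap.id : H →ₗ[ℂ] H) - (Pwp : H →ₗ[ℂ] H)) ∘ (fun i : Fin k => v i) := by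
      funext i
      simp [hu i i.isLt, LinearMap.sub_apply]
    rw [hfun]
    apply hli.map
    have h1 : Submodule.span ℂ (Set.range fun i : Fin k => v i)
        ≤ Submodule.span ℂ {x : H | ∃ i < k, x = v i} := by
      apply Submodule.span_mono
      rintro x ⟨i, rfl⟩
      exact ⟨i, i.isLt, rfl⟩
    have h2 : LinearMap.ker ((LinearMap.id : H →ₗ[ℂ] H) - (Pwp : H →ₗ[ℂ] H)) ≤ Wp := by
      intro x hx
      have hx' : x - Pwp x = 0 := hx
      have : x = Pwp x := by
        have := sub_eq_zero.mp hx'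
        exact this
      rw [this]
      exact (hPwp x).1
    have hd : Disjoint (Submodule.span ℂ {x : H | ∃ i < k, x = v i}) Wp :=
      disjoint_iff.mpr hdisj
    exact (hd.mono h1 h2)
  -- q n ≠ 0 for n < k
  have hq0 : ∀ n < k, q n ≠ 0 := by
    intro n hn h0
    have hmem : u n ∈ Submodule.span ℂ {x : H | ∃ i < n, x = u i} := by
      have := hqmem n hn
      rwa [h0, sub_zero] at this
    have hsub : {x : H | ∃ i < n, x = u i}
        ⊆ (fun j : Fin k => u j) '' {j : Fin k | (j : ℕ) < n} := by
      rintro x ⟨i, hi, rfl⟩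
      exact ⟨⟨i, lt_trans hi hn⟩, hi, rfl⟩
    have hmem2 : (fun j : Fin k => u j) ⟨n, hn⟩ ∈
        Submodule.span ℂ ((fun j : Fin k => u j) '' {j : Fin k | (j : ℕ) < n}) :=
      Submodule.span_mono hsub hmem
    exact hLIu.notMem_span_image (by simp) hmem2
  have hcne : ∀ n < k, ((‖q n‖ : ℂ) ^ 2) ≠ 0 := by
    intro n hn
    have : ‖q n‖ ≠ 0 := norm_ne_zero_iff.mpr (hq0 n hn)
    exact pow_ne_zero 2 (by exact_mod_cast this)
  -- ⟨u m, q n⟩ = 0 for m < n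
  have hortho : ∀ m n : ℕ, m < n → n < k → (inner ℂ (u m) (q n) : ℂ) = 0 := by
    intro m n hmn hn
    have h : (inner ℂ (q n) (u m) : ℂ) = 0 :=
      hqorth n hn _ (Submodule.subset_span ⟨m, hmn, rfl⟩)
    rw [← inner_conj_symm, h, map_zero]
  -- ⟨u n, q n⟩ = ‖q n‖²
  have hqnorm : ∀ n < k, (inner ℂ (u n) (q n) : ℂ) = (‖q n‖ : ℂ) ^ 2 := by
    intro n hn
    have h1 : (inner ℂ (q n) (u n - q n) : ℂ) = 0 := hqorth n hn _ (hqmem n hn)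
    have h2 : (inner ℂ (u n - q n) (q n) : ℂ) = 0 := by
      rw [← inner_conj_symm, h1, map_zero]
    have h3 : (inner ℂ (u n) (q n) : ℂ)
        = inner ℂ (u n - q n) (q n) + inner ℂ (q n) (q n) := by
      rw [← inner_add_left, sub_add_cancel]
    rw [h3, h2, zero_add, inner_self_eq_norm_sq_to_K]
    norm_cast
  -- Wp ⊥ q n (second slot)
  have hWq : ∀ n < k, ∀ w ∈ Wp, (inner ℂ w (q n) : ℂ) = 0 := by
    intro n hn w hw
    have h1 : (inner ℂ w (u n - q n) : ℂ) = 0 := by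
      apply key w _ _ _ (hqmem n hn)
      rintro x ⟨i, hi, rfl⟩
      exact huWp' i (lt_trans hi hn) w hw
    have h2 : (inner ℂ w (u n) : ℂ) = 0 := huWp' n hn w hw
    have : (inner ℂ w (q n) : ℂ) = inner ℂ w (u n) - inner ℂ w (u n - q n) := by
      rw [← inner_sub_right]
      congr 1
      abel
    rw [this, h1, h2, sub_zero]
  -- Wp ⊥ ut n i (second slot)
  have hWut : ∀ n, n < k → ∀ i ≤ n, ∀ w ∈ Wp, (inner ℂ w (ut n i) : ℂ) = 0 := by
    intro n
    induction n with
    | zero =>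
      intro hn i hi w hw
      interval_cases i
      rw [hdiag 0 hn, inner_smul_right, hWq 0 hn w hw, mul_zero]
    | succ n ih =>
      intro hn1 i hi w hw
      have hn : n < k := lt_trans (Nat.lt_succ_self n) hn1
      rcases Nat.eq_or_lt_of_le hi with rfl | hi'
      · rw [hdiag (n + 1) hn1, inner_smul_right, hWq (n + 1) hn1 w hw, mul_zero]
      · have hi'' : i ≤ n := Nat.lt_succ_iff.mp hi'
        rw [hrec n hn1 i hi'', inner_sub_right, ih hn i hi'' w hw,
          inner_smul_right, inner_smul_right, hWq (n + 1) hn1 w hw]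
        ring
  -- main biorthogonality for u's
  have main : ∀ n, n < k → ∀ i ≤ n, ∀ m ≤ n,
      (inner ℂ (u m) (ut n i) : ℂ) = if m = i then 1 else 0 := by
    intro n
    induction n with
    | zero =>
      intro hn i hi m hm
      interval_cases i
      interval_cases m
      rw [hdiag 0 hn, inner_smul_right, hqnorm 0 hn, if_pos rfl,
        inv_mul_cancel₀ (hcne 0 hn)]
    | succ n ih =>
      intro hn1 i hi m hm
      have hn : n < k := lt_trans (Nat.lt_succ_self n) hn1
      rcases Nat.eq_or_lt_of_le hi with rfl | hi'
      · -- i = n + 1 : diagonal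
        rw [hdiag (n + 1) hn1, inner_smul_right]
        rcases Nat.eq_or_lt_of_le hm with rfl | hm'
        · rw [hqnorm (n + 1) hn1, if_pos rfl, inv_mul_cancel₀ (hcne (n + 1) hn1)]
        · rw [hortho m (n + 1) hm' hn1, mul_zero, if_neg (Nat.ne_of_lt hm')]
      · have hi'' : i ≤ n := Nat.lt_succ_iff.mp hi'
        rw [hrec n hn1 i hi'', inner_sub_right, inner_smul_right, inner_smul_right]
        rcases Nat.eq_or_lt_of_le hm with rfl | hm'
        · rw [hqnorm (n + 1) hn1, if_neg (Nat.ne_of_gt hi'),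
            inv_mul_cancel₀ (hcne (n + 1) hn1), mul_one, sub_self]
        · have hm'' : m ≤ n := Nat.lt_succ_iff.mp hm'
          rw [hortho m (n + 1) hm' hn1, ih hn i hi'' m hm'']
          ring
  -- conclude
  intro m hm i hi
  have hk1 : k - 1 < k := Nat.sub_lt hk one_pos
  have hm' : m ≤ k - 1 := Nat.le_sub_one_of_lt hm
  have hi' : i ≤ k - 1 := Nat.le_sub_one_of_lt hi
  have hsplit : (inner ℂ (v m) (ut (k - 1) i) : ℂ)
      = inner ℂ (u m) (ut (k - 1) i) + inner ℂ (Pwp (v m)) (ut (k - 1) i) := by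
    rw [← inner_add_left]
    congr 1
    rw [hu m hm]
    abel
  rw [hsplit, hWut (k - 1) hk1 i hi' (Pwp (v m)) (hPwp (v m)).1, add_zero]
  exact main (k - 1) hk1 i hi' m hm'
end
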